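/- Let O be a reduced operad in pointed topological spaces and let T be a tree appearing in the bar construction B(O)(I ∪_a J) for a ∈ I. Then T admits at most one decomposition as a grafting of an I-labeled tree and a J-labeled tree along the leaf a; consequently the cooperadic partial decomposition B(O)(I ∪_a J) → B(O)(I) ∧ B(O)(J), sending T to its unique decomposition if one exists and to the basepoint otherwise, is well-defined. -/

import Mathlib

/-- Rooted trees with leaves labeled by `α` (internal vertices carry an ordered list of
subtrees; the root's unary edge is implicit). -/
inductive LTree (α : Type) : Type
  | leaf : α → LTree α
  | node : List (LTree α) → LTree α

namespace LTree

/-- The list of leaf labels of a tree. -/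
def leaves {α : Type} : LTree α → List α
  | leaf a => [a]
  | node ts => ts.attach.flatMap (fun t => leaves t.1)
termination_by t => sizeOf t
decreasing_by
  simp_wf
  have := List.sizeOf_lt_of_mem t.2
  omega


/-- Grafting `T₂` onto a tree along the leaf labeled `a`: replace each leaf labeled `a`
by `T₂`. -/
def graft {α : Type} [DecidableEq α] (a : α) (T₂ : LTree α) : LTree α → LTree α
  | leaf b => if b = a then T₂ else leaf b
  | node ts => node (ts.attach.map (fun t => graft a T₂ t.1))
termination_by t => sizeOf t
decreasing_by
  simp_wf
  have := List.sizeOf_lt_of_mem t.2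
  omega


/-- A tree is reduced if every internal vertex has at least two children (as in the bar
construction, where only the implicit root edge may be unary). -/
def Reduced {α : Type} : LTree α → Prop
  | leaf _ => True
  | node ts => 2 ≤ ts.length ∧ ∀ t ∈ ts.attach, Reduced t.1
termination_by t => sizeOf t
decreasing_by
  simp_wf
  have := List.sizeOf_lt_of_mem t.2
  omega


end LTree

/-!
The labels of `T₂` avoid those of `T₁`, so in `graft a T₂ t` the labels of `t` other than `a`
reappear unchanged, and `a` is a label of `t` exactly when the graft meets the labels of `T₂`.
Hence two decompositions of the same tree induce, vertex by vertex, subtrees with the same labels,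
and one can descend into matching children. The only possible mismatch is a leaf against an
internal vertex all of whose leaves carry the same label, which reducedness and injective
labelling exclude. Once `T₁ = T₁'`, the tree `T₂` is read off at the leaf `a`.
-/

theorem List.eq_of_map_eq_map {β γ : Type*} {f g : β → γ} :
    ∀ {l l' : List β}, (∀ x ∈ l, ∀ y ∈ l', f x = g y → x = y) → l.map f = l'.map g → l = l'
  | [], [], _, _ => rfl
  | x :: l, y :: l', h, hmap => by
    simp only [List.map_cons, List.cons.injEq] at hmap
    rw [h x List.mem_cons_self y List.mem_cons_self hmap.1,
      List.eq_of_map_eq_map (fun x hx y hy => h x (.tail _ hx) y (.tail _ hy)) hmap.2]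

namespace LTree

variable {α : Type}

@[elab_as_elim, induction_eliminator]
theorem induction {motive : LTree α → Prop} (leaf : ∀ a, motive (leaf a))
    (node : ∀ ts, (∀ t ∈ ts, motive t) → motive (node ts)) (t : LTree α) : motive t :=
  LTree.rec (motive_2 := fun ts => ∀ t ∈ ts, motive t) leaf node (by simp)
    (fun _ _ hhead htail => List.forall_mem_cons.2 ⟨hhead, htail⟩) t

@[simp]
theorem leaves_leaf (a : α) : leaves (leaf a) = [a] := by
  simp [leaves]

@[simp]
theorem leaves_node (ts : List (LTree α)) : leaves (node ts) = ts.flatMap leaves := by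
  rw [leaves]
  simp

@[simp]
theorem reduced_node {ts : List (LTree α)} :
    Reduced (node ts) ↔ 2 ≤ ts.length ∧ ∀ t ∈ ts, Reduced t := by
  simp [Reduced]

theorem leaves_ne_nil_of_reduced {t : LTree α} (ht : Reduced t) : leaves t ≠ [] := by
  induction t with
  | leaf a => simp
  | node ts ih =>
    obtain ⟨hlen, hts⟩ := reduced_node.1 ht
    obtain ⟨t, hmem⟩ := List.exists_mem_of_length_pos (by omega : 0 < ts.length)
    simpa [List.flatMap_eq_nil_iff] using ⟨t, hmem, ih t hmem (hts t hmem)⟩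

theorem eq_leaf_of_forall_mem_leaves {t : LTree α} {b : α} (ht : Reduced t)
    (hn : (leaves t).Nodup) (hb : ∀ x ∈ leaves t, x = b) : t = leaf b := by
  cases t with
  | leaf a => simpa using hb
  | node ts =>
    exfalso
    obtain ⟨hlen, hts⟩ := reduced_node.1 ht
    have hlen_leaves : ts.length ≤ (leaves (node ts)).length := by
      rw [leaves_node, List.length_flatMap]
      refine (List.length_map _ ▸ List.length_le_sum_of_one_le _ ?_)
      simpa [Nat.one_le_iff_ne_zero] using fun t ht => leaves_ne_nil_of_reduced (hts t ht)
    rw [List.eq_replicate_iff.2 ⟨rfl, hb⟩, List.nodup_replicate] at hn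
    omega

section Graft

variable [DecidableEq α]

@[simp]
theorem graft_leaf (a b : α) (T : LTree α) :
    graft a T (leaf b) = if b = a then T else leaf b := by
  simp [graft]

@[simp]
theorem graft_node (a : α) (T : LTree α) (ts : List (LTree α)) :
    graft a T (node ts) = node (ts.map (graft a T)) := by
  simp [graft]

theorem mem_leaves_graft {a x : α} {T t : LTree α} :
    x ∈ leaves (graft a T t) ↔ (x ∈ leaves t ∧ x ≠ a) ∨ (a ∈ leaves t ∧ x ∈ leaves T) := by
  induction t with
  | leaf b => by_cases hb : b = a <;> aesop
  | node ts ih => simp only [graft_node, leaves_node, List.flatMap_map]; aesop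

theorem graft_injective_of_mem_leaves {a : α} {t : LTree α} (ha : a ∈ leaves t) :
    Function.Injective (fun T => graft a T t) := by
  intro T T' h
  induction t with
  | leaf b => simp_all
  | node ts ih =>
    obtain ⟨s, hs, has⟩ := List.mem_flatMap.1 (leaves_node ts ▸ ha)
    simp only [graft_node, node.injEq, List.map_inj_left] at h
    exact ih s hs has (h s hs)

-- `I` stands for the labels of the whole first factor; subtrees inherit the disjointness from it.
theorem mem_leaves_of_graft_eq_graft {a x : α} {I : Set α} {T T' t t' : LTree α}
    (hT : leaves T ≠ []) (hTI : ∀ b ∈ leaves T, b ∉ I) (hT'I : ∀ b ∈ leaves T', b ∉ I)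
    (ht : ∀ y ∈ leaves t, y ∈ I) (ht' : ∀ y ∈ leaves t', y ∈ I)
    (h : graft a T t = graft a T' t') (hx : x ∈ leaves t) : x ∈ leaves t' := by
  by_cases hxa : x = a
  · subst hxa
    obtain ⟨b, hb⟩ := List.exists_mem_of_ne_nil _ hT
    have hb' : b ∈ leaves (graft x T' t') := h ▸ mem_leaves_graft.2 (Or.inr ⟨hx, hb⟩)
    rcases mem_leaves_graft.1 hb' with ⟨hbt', -⟩ | ⟨hxt', -⟩
    · exact absurd (ht' b hbt') (hTI b hb)
    · exact hxt'
  · have hx' : x ∈ leaves (graft a T' t') := h ▸ mem_leaves_graft.2 (Or.inl ⟨hx, hxa⟩)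
    rcases mem_leaves_graft.1 hx' with ⟨hxt', -⟩ | ⟨-, hxT'⟩
    · exact hxt'
    · exact absurd (ht x hx) (hT'I x hxT')

theorem eq_of_graft_eq_graft {a : α} {I : Set α} {T T' : LTree α}
    (hT : leaves T ≠ []) (hT' : leaves T' ≠ [])
    (hTI : ∀ b ∈ leaves T, b ∉ I) (hT'I : ∀ b ∈ leaves T', b ∉ I) {t t' : LTree α}
    (hr : Reduced t) (hr' : Reduced t') (hn : (leaves t).Nodup) (hn' : (leaves t').Nodup)
    (ht : ∀ x ∈ leaves t, x ∈ I) (ht' : ∀ x ∈ leaves t', x ∈ I)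
    (h : graft a T t = graft a T' t') : t = t' := by
  induction t generalizing t' with
  | leaf b =>
    refine (eq_leaf_of_forall_mem_leaves hr' hn' fun x hx => ?_).symm
    simpa using mem_leaves_of_graft_eq_graft hT' hT'I hTI ht' ht h.symm hx
  | node ts ih =>
    cases t' with
    | leaf b =>
      refine eq_leaf_of_forall_mem_leaves hr hn fun x hx => ?_
      simpa using mem_leaves_of_graft_eq_graft hT hTI hT'I ht ht' h hx
    | node ts' =>
      simp only [graft_node, node.injEq] at h
      congr 1
      refine List.eq_of_map_eq_map (fun s hs s' hs' hss' => ?_) h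
      simp only [leaves_node, List.mem_flatMap] at hn hn' ht ht'
      exact ih s hs (reduced_node.1 hr |>.2 s hs) (reduced_node.1 hr' |>.2 s' hs')
        ((List.nodup_flatMap.1 hn).1 s hs) ((List.nodup_flatMap.1 hn').1 s' hs')
        (fun x hx => ht x ⟨s, hs, hx⟩) (fun x hx => ht' x ⟨s', hs', hx⟩) hss'

end Graft

end LTree

open LTree

theorem stmt_14_general {α : Type} [DecidableEq α] (a : α) (T₁ T₁' T₂ T₂' : LTree α)
    (hr₁ : Reduced T₁) (hr₁' : Reduced T₁') (hr₂ : Reduced T₂) (hr₂' : Reduced T₂')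
    (hn₁ : (leaves T₁).Nodup) (hn₁' : (leaves T₁').Nodup)
    (ha : a ∈ leaves T₁)
    (hd : ∀ b ∈ leaves T₂, b ∉ leaves T₁) (hd' : ∀ b ∈ leaves T₂', b ∉ leaves T₁')
    (hI : {b | b ∈ leaves T₁} = {b | b ∈ leaves T₁'})
    (hgraft : graft a T₂ T₁ = graft a T₂' T₁') :
    T₁ = T₁' ∧ T₂ = T₂' := by
  have hI' (b : α) : b ∈ leaves T₁ ↔ b ∈ leaves T₁' := Set.ext_iff.1 hI b
  obtain rfl : T₁ = T₁' :=
    eq_of_graft_eq_graft (I := {b | b ∈ leaves T₁})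
      (leaves_ne_nil_of_reduced hr₂) (leaves_ne_nil_of_reduced hr₂')
      hd (fun b hb hbI => hd' b hb ((hI' b).1 hbI)) hr₁ hr₁' hn₁ hn₁'
      (fun _ => id) (fun b hb => (hI' b).2 hb) hgraft
  exact ⟨rfl, graft_injective_of_mem_leaves ha hgraft⟩

/-- a tree appearing in the bar construction admits at most one
decomposition as a grafting of an `I`-labeled tree and a `J`-labeled tree along the
leaf `a`: if `(T₁, T₂)` and `(T₁', T₂')` are pairs of reduced, injectively-labeled
trees with `a` among the leaves of `T₁` and `T₁'`, with the leaf labels of `T₂`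
(resp. `T₂'`) disjoint from those of `T₁` (resp. `T₁'`), with `T₁, T₁'` having the same
leaf-label set `I` and `T₂, T₂'` the same leaf-label set `J`, and if both pairs graft to
the same tree, then `T₁ = T₁'` and `T₂ = T₂'`.  (This uniqueness is what makes the
cooperadic partial decomposition of the bar construction well-defined.) -/
theorem stmt_14 {α : Type} [DecidableEq α] (a : α) (T₁ T₁' T₂ T₂' : LTree α)
    (hr₁ : Reduced T₁) (hr₁' : Reduced T₁') (hr₂ : Reduced T₂) (hr₂' : Reduced T₂')
    (hn₁ : (leaves T₁).Nodup) (hn₁' : (leaves T₁').Nodup)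
    (hn₂ : (leaves T₂).Nodup) (hn₂' : (leaves T₂').Nodup)
    (ha : a ∈ leaves T₁) (ha' : a ∈ leaves T₁')
    (hd : ∀ b ∈ leaves T₂, b ∉ leaves T₁) (hd' : ∀ b ∈ leaves T₂', b ∉ leaves T₁')
    (hI : {b | b ∈ leaves T₁} = {b | b ∈ leaves T₁'})
    (hJ : {b | b ∈ leaves T₂} = {b | b ∈ leaves T₂'})
    (hgraft : graft a T₂ T₁ = graft a T₂' T₁') :
    T₁ = T₁' ∧ T₂ = T₂' :=
  stmt_14_general a T₁ T₁' T₂ T₂' hr₁ hr₁' hr₂ hr₂' hn₁ hn₁' ha hd hd' hI hgraft
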